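/- There are no Ũ-cycles: there is no x ∈ ℝ with x ≥ 0 and no l ∈ ℕ with l ≥ 1 such that Ũ^l(x) = x. -/

import Mathlib

/-!
The potential `Φ x = x / (1 - fract x)` never decreases along an orbit of `Ũ` in `[0, ∞)`:
an odd step halves both `x` and `1 - fract x`, so `Φ` is unchanged, while an even step sends
`x` to `(3x+1)/2 > 3x/2` and multiplies `1 - fract x` by at most `3/2`, so `Φ` strictly increases.
On a cycle `Φ` is therefore constant, so every step is odd and the orbit strictly decreases,
which is impossible on a cycle.
-/

/-- The flipped 3x+1 function: `Ũx = (3x+1)/2` if `⌊x⌋` is even, `x/2` if `⌊x⌋` is odd. -/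
noncomputable def Utilde (x : ℝ) : ℝ := if Even ⌊x⌋ then (3 * x + 1) / 2 else x / 2

open Function

theorem Function.IsPeriodicPt.apply_iterate_succ_eq_of_monotone {α β : Type*} [PartialOrder β]
    {f : α → α} {Φ : α → β} {x : α} {l : ℕ} (hx : IsPeriodicPt f l x) (hl : 0 < l)
    (hΦ : Monotone fun n => Φ (f^[n] x)) (n : ℕ) : Φ (f^[n + 1] x) = Φ (f^[n] x) := by
  refine le_antisymm ?_ (hΦ n.le_succ)
  calc Φ (f^[n + 1] x) ≤ Φ (f^[n + l] x) := hΦ (by omega)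
    _ = Φ (f^[n] x) := by rw [iterate_add_apply, hx.eq]

lemma Utilde_of_even {x : ℝ} (h : Even ⌊x⌋) : Utilde x = (3 * x + 1) / 2 := if_pos h

lemma Utilde_of_odd {x : ℝ} (h : Odd ⌊x⌋) : Utilde x = x / 2 :=
  if_neg (Int.not_even_iff_odd.mpr h)

lemma mapsTo_Utilde_Ici : Set.MapsTo Utilde (Set.Ici 0) (Set.Ici 0) := fun x (hx : 0 ≤ x) => by
  unfold Utilde; split_ifs <;> simp only [Set.mem_Ici] <;> positivity

lemma Utilde_lt_self_of_odd {x : ℝ} (hx : 0 ≤ x) (h : Odd ⌊x⌋) : Utilde x < x := by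
  have hx0 : 0 < x := hx.lt_of_ne (by rintro rfl; simp at h)
  rw [Utilde_of_odd h]
  exact half_lt_self hx0

lemma one_sub_fract_Utilde_of_odd {x : ℝ} (h : Odd ⌊x⌋) :
    1 - Int.fract (Utilde x) = (1 - Int.fract x) / 2 := by
  obtain ⟨m, hm⟩ := h
  have hfloor : ⌊x / 2⌋ = m := by
    rw [Int.floor_eq_iff]
    have := Int.floor_le x
    have := Int.lt_floor_add_one x
    rw [hm] at *
    push_cast at *
    constructor <;> linarith
  rw [Utilde_of_odd ⟨m, hm⟩, Int.fract, Int.fract, hfloor, hm]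
  push_cast
  ring

lemma one_sub_fract_Utilde_le_of_even {x : ℝ} (h : Even ⌊x⌋) :
    1 - Int.fract (Utilde x) ≤ 3 * (1 - Int.fract x) / 2 := by
  obtain ⟨m, hm⟩ := h
  have hfloor : ⌊(3 * x + 1) / 2⌋ ≤ 3 * m + 1 := by
    rw [← Int.lt_add_one_iff, Int.floor_lt]
    have := Int.lt_floor_add_one x
    rw [hm] at this
    push_cast at *
    linarith
  have hfloor' : (⌊(3 * x + 1) / 2⌋ : ℝ) ≤ 3 * m + 1 := by exact_mod_cast hfloor
  rw [Utilde_of_even ⟨m, hm⟩, Int.fract, Int.fract, hm]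
  push_cast
  linarith

noncomputable def Phi (x : ℝ) : ℝ := x / (1 - Int.fract x)

lemma one_sub_fract_pos (x : ℝ) : 0 < 1 - Int.fract x := sub_pos.mpr (Int.fract_lt_one x)

lemma Phi_Utilde_of_odd {x : ℝ} (h : Odd ⌊x⌋) : Phi (Utilde x) = Phi x := by
  rw [Phi, Phi, one_sub_fract_Utilde_of_odd h, Utilde_of_odd h,
    div_div_div_cancel_right₀ two_ne_zero]

lemma Phi_lt_Phi_Utilde_of_even {x : ℝ} (hx : 0 ≤ x) (h : Even ⌊x⌋) :
    Phi x < Phi (Utilde x) := by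
  have hg := one_sub_fract_pos x
  calc Phi x = (3 * x / 2) / (3 * (1 - Int.fract x) / 2) := by
        rw [Phi, div_div_div_cancel_right₀ two_ne_zero, mul_div_mul_left _ _ three_ne_zero]
    _ < ((3 * x + 1) / 2) / (3 * (1 - Int.fract x) / 2) := by gcongr; linarith
    _ ≤ ((3 * x + 1) / 2) / (1 - Int.fract (Utilde x)) :=
        div_le_div_of_nonneg_left (by positivity) (one_sub_fract_pos _)
          (one_sub_fract_Utilde_le_of_even h)
    _ = Phi (Utilde x) := by rw [Phi, Utilde_of_even h]

lemma Phi_le_Phi_Utilde {x : ℝ} (hx : 0 ≤ x) : Phi x ≤ Phi (Utilde x) := by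
  rcases Int.even_or_odd ⌊x⌋ with h | h
  · exact (Phi_lt_Phi_Utilde_of_even hx h).le
  · exact (Phi_Utilde_of_odd h).ge

/-- There are no `Ũ`-cycles. -/
theorem no_Utilde_cycles (x : ℝ) (hx : 0 ≤ x) (l : ℕ) (hl : 1 ≤ l) :
    Utilde^[l] x ≠ x := by
  intro hcycle
  have hnonneg (n : ℕ) : 0 ≤ Utilde^[n] x := mapsTo_Utilde_Ici.iterate n hx
  have hconst := IsPeriodicPt.apply_iterate_succ_eq_of_monotone hcycle hl
    (monotone_nat_of_le_succ fun n => by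
      rw [iterate_succ_apply']; exact Phi_le_Phi_Utilde (hnonneg n))
  have hodd (n : ℕ) : Odd ⌊Utilde^[n] x⌋ := by
    refine Int.not_even_iff_odd.mp fun heven => ?_
    have := Phi_lt_Phi_Utilde_of_even (hnonneg n) heven
    rw [← iterate_succ_apply' Utilde n, hconst n] at this
    exact this.false
  have hanti : StrictAnti fun n => Utilde^[n] x := strictAnti_nat_of_succ_lt fun n => by
    rw [iterate_succ_apply']; exact Utilde_lt_self_of_odd (hnonneg n) (hodd n)
  exact (hanti hl).ne hcycle
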